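/- arXiv:2304.02133 — 2 statements merged into one kernel-verified Lean document; each statement's English description precedes it below -/
import Mathlib

section
/- Let m > 0, let h ∈ 𝒮(ℝ³;ℂ), let a ∈ ℝ³ with a ≠ 0, and let R > 0. Define f : [0,∞) → ℝ by f(s) := (sin(Rs) − Rs·cos(Rs))/s³ for s > 0 and f(0) := R³/3, and set E(p) := √(m² + ‖p‖²). Then the double integrals I_j := ∫_{ℝ³}∫_{ℝ³} conj(h(q − j·a)) · h(p − j·a) · f(‖p − q‖) · (⟨p,q⟩ + m² − E(p)E(q)) / (E(p)E(q)) dp dq (which converge absolutely for each j ∈ ℕ) satisfy I_j → 0 as j → ∞. -/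
/- STATEMENT 9: vanishing of the Newton–Wigner/Terno deformation term on boosted
   localizing states: the absolutely convergent double integrals
   I_j = ∬ conj(h(q−ja)) h(p−ja) f(‖p−q‖) (⟨p,q⟩+m²−E(p)E(q))/(E(p)E(q)) dp dq
   tend to 0 as j → ∞. -/

noncomputable section

open MeasureTheory SchwartzMap Real
open scoped RealInnerProductSpace

abbrev Space3 := EuclideanSpace ℝ (Fin 3)

/-- The relativistic energy `E(p) = √(m² + ‖p‖²)`. -/
def relEnergy (m : ℝ) (p : Space3) : ℝ := Real.sqrt (m ^ 2 + ‖p‖ ^ 2)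

/-- `f(s) = (sin(Rs) − Rs·cos(Rs))/s³` for `s > 0`, `f(0) = R³/3`: up to a constant,
the Fourier transform of the indicator of the ball of radius `R`. -/
def ballFT (R : ℝ) (s : ℝ) : ℝ :=
  if s = 0 then R ^ 3 / 3 else (Real.sin (R * s) - R * s * Real.cos (R * s)) / s ^ 3

/-- The integrand of `I_j`. -/
def deformationIntegrand (m : ℝ) (h : 𝓢(Space3, ℂ)) (a : Space3) (R : ℝ) (j : ℕ)
    (z : Space3 × Space3) : ℂ :=
  (starRingEnd ℂ) (h (z.2 - (j : ℝ) • a)) * h (z.1 - (j : ℝ) • a)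
    * ((ballFT R ‖z.1 - z.2‖ : ℝ) : ℂ)
    * (((⟪z.1, z.2⟫ + m ^ 2 - relEnergy m z.1 * relEnergy m z.2)
        / (relEnergy m z.1 * relEnergy m z.2) : ℝ) : ℂ)

/-! The deformation factor `(⟨x, y⟩ + m² − E(x)E(y)) / (E(x)E(y))` is bounded by `2`
(Cauchy–Schwarz for `(x, m)` and `(y, m)` in `ℝ³ × ℝ`) and invariant under the scaling
`(m, x, y) ↦ (s m, s x, s y)`, `s > 0`. Scaling by `1/t`, its value at `(p + t a, q + t a)` is its
value at `(m/t, p/t + a, q/t + a) → (0, a, a)`, a point where it is continuous and vanishes because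
`a ≠ 0`. Translating both variables by `j a` moves all dependence on `j` into this factor, while
`|f| ≤ |R|³/3` gives the integrable majorant `‖h(p)‖ ‖h(q)‖`; dominated convergence concludes. -/

open Filter Topology

lemma abs_sin_sub_mul_cos_le_of_nonneg {u : ℝ} (hu : 0 ≤ u) :
    |sin u - u * cos u| ≤ u ^ 3 / 3 := by
  have hderiv : ∀ v, HasDerivAt (fun v => sin v - v * cos v) (v * sin v) v := fun v =>
    ((hasDerivAt_sin v).sub ((hasDerivAt_id' v).mul (hasDerivAt_cos v))).congr_deriv (by ring)
  have hbound : ∀ v ∈ Set.Ico 0 u, ‖v * sin v‖ ≤ v ^ 2 := fun v hv => by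
    rw [norm_mul, norm_eq_abs, norm_eq_abs, abs_of_nonneg hv.1, sq]
    exact mul_le_mul_of_nonneg_left ((abs_sin_le_abs).trans_eq (abs_of_nonneg hv.1)) hv.1
  have := image_norm_le_of_norm_deriv_right_le_deriv_boundary (f := fun v => sin v - v * cos v)
    (B := fun v => v ^ 3 / 3) (by fun_prop) (fun v _ => (hderiv v).hasDerivWithinAt)
    (by simp) (fun v => by simpa using (hasDerivAt_pow 3 v).div_const 3) hbound
    (Set.right_mem_Icc.2 hu)
  simpa using this

lemma abs_sin_sub_mul_cos_le (u : ℝ) : |sin u - u * cos u| ≤ |u| ^ 3 / 3 := by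
  rcases le_total 0 u with hu | hu
  · simpa [abs_of_nonneg hu] using abs_sin_sub_mul_cos_le_of_nonneg hu
  · have := abs_sin_sub_mul_cos_le_of_nonneg (neg_nonneg.2 hu)
    rw [sin_neg, cos_neg, ← abs_neg, neg_mul, sub_neg_eq_add, neg_add_eq_sub, neg_sub] at this
    rwa [abs_of_nonpos hu]

lemma abs_ballFT_le (R s : ℝ) : |ballFT R s| ≤ |R| ^ 3 / 3 := by
  unfold ballFT
  split_ifs with hs
  · simp [abs_div, abs_pow]
  · rw [abs_div, abs_pow, div_le_iff₀ (by positivity)]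
    calc _ ≤ |R * s| ^ 3 / 3 := abs_sin_sub_mul_cos_le _
      _ = |R| ^ 3 / 3 * |s| ^ 3 := by rw [abs_mul]; ring

lemma measurable_ballFT (R : ℝ) : Measurable (ballFT R) :=
  Measurable.ite (measurableSet_singleton 0) measurable_const (by fun_prop)

lemma abs_inner_add_sq_le {E : Type*} [NormedAddCommGroup E] [InnerProductSpace ℝ E]
    (m : ℝ) (x y : E) : |⟪x, y⟫ + m ^ 2| ≤ √(m ^ 2 + ‖x‖ ^ 2) * √(m ^ 2 + ‖y‖ ^ 2) := by
  simpa [WithLp.prod_inner_apply, WithLp.prod_norm_eq_of_L2, sq, add_comm] using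
    abs_real_inner_le_norm (WithLp.toLp 2 (x, m)) (WithLp.toLp 2 (y, m))

lemma relEnergy_smul {s : ℝ} (hs : 0 ≤ s) (m : ℝ) (x : Space3) :
    relEnergy (s * m) (s • x) = s * relEnergy m x := by
  rw [relEnergy, relEnergy, norm_smul, norm_eq_abs, mul_pow, mul_pow, sq_abs, ← mul_add,
    sqrt_mul (sq_nonneg s), sqrt_sq hs]

lemma abs_inner_add_sq_le_relEnergy_mul (m : ℝ) (x y : Space3) :
    |⟪x, y⟫ + m ^ 2| ≤ relEnergy m x * relEnergy m y :=
  abs_inner_add_sq_le m x y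

def deformationFactor (m : ℝ) (x y : Space3) : ℝ :=
  (⟪x, y⟫ + m ^ 2 - relEnergy m x * relEnergy m y) / (relEnergy m x * relEnergy m y)

lemma abs_deformationFactor_le_two (m : ℝ) (x y : Space3) : |deformationFactor m x y| ≤ 2 := by
  have hN := abs_le.1 (abs_inner_add_sq_le_relEnergy_mul m x y)
  rcases (mul_nonneg (sqrt_nonneg _) (sqrt_nonneg _) :
    0 ≤ relEnergy m x * relEnergy m y).eq_or_lt with hE | hE
  · simp [deformationFactor, ← hE]
  · rw [deformationFactor, abs_div, abs_of_pos hE, div_le_iff₀ hE, abs_le]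
    constructor <;> linarith [hN.1, hN.2]

lemma deformationFactor_smul {s : ℝ} (hs : 0 < s) (m : ℝ) (x y : Space3) :
    deformationFactor (s * m) (s • x) (s • y) = deformationFactor m x y := by
  rw [deformationFactor, deformationFactor, relEnergy_smul hs.le, relEnergy_smul hs.le,
    real_inner_smul_left, real_inner_smul_right,
    ← mul_div_mul_left _ (relEnergy m x * relEnergy m y) (pow_ne_zero 2 hs.ne')]
  ring_nf

lemma deformationFactor_zero_self (a : Space3) : deformationFactor 0 a a = 0 := by
  simp [deformationFactor, relEnergy, sq]

lemma continuousAt_deformationFactor {a : Space3} (ha : a ≠ 0) :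
    ContinuousAt (fun w : ℝ × Space3 × Space3 => deformationFactor w.1 w.2.1 w.2.2) (0, a, a) := by
  unfold deformationFactor relEnergy
  exact ContinuousAt.div (by fun_prop) (by fun_prop) (by simp [ha])

lemma tendsto_deformationFactor_add_smul {a : Space3} (ha : a ≠ 0) (m : ℝ) (p q : Space3) :
    Tendsto (fun t : ℝ => deformationFactor m (p + t • a) (q + t • a)) atTop (𝓝 0) := by
  have hw : Tendsto (fun t : ℝ => (t⁻¹ * m, t⁻¹ • p + a, t⁻¹ • q + a)) atTop (𝓝 (0, a, a)) := by
    have := tendsto_inv_atTop_zero (𝕜 := ℝ)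
    convert (this.mul_const m).prodMk_nhds (((this.smul_const p).add_const a).prodMk_nhds
      ((this.smul_const q).add_const a)) using 2; simp
  rw [← deformationFactor_zero_self a]
  refine ((continuousAt_deformationFactor ha).tendsto.comp hw).congr' ?_
  filter_upwards [eventually_gt_atTop 0] with t ht
  rw [Function.comp_apply, ← deformationFactor_smul (inv_pos.2 ht) m (p + t • a), smul_add,
    smul_add, inv_smul_smul₀ ht.ne']

-- Instance search does not unfold `volume` on a product to `volume.prod volume`.
instance : (volume : Measure (Space3 × Space3)).IsAddRightInvariant :=
  Measure.prod.instIsAddRightInvariant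

section Integrand

variable (m : ℝ) (h : 𝓢(Space3, ℂ)) (a : Space3) (R : ℝ) (j : ℕ)

lemma deformationIntegrand_add_smul (z : Space3 × Space3) :
    deformationIntegrand m h a R j (z + ((j : ℝ) • a, (j : ℝ) • a)) =
      (starRingEnd ℂ) (h z.2) * h z.1 * ((ballFT R ‖z.1 - z.2‖ : ℝ) : ℂ)
        * ((deformationFactor m (z.1 + (j : ℝ) • a) (z.2 + (j : ℝ) • a) : ℝ) : ℂ) := by
  simp [deformationIntegrand, deformationFactor]

lemma norm_deformationIntegrand_le (z : Space3 × Space3) :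
    ‖deformationIntegrand m h a R j z‖ ≤
      2 * (|R| ^ 3 / 3) * (‖h (z.1 - (j : ℝ) • a)‖ * ‖h (z.2 - (j : ℝ) • a)‖) := by
  have hF := abs_deformationFactor_le_two m z.1 z.2
  rw [deformationFactor] at hF
  simp only [deformationIntegrand, norm_mul, RCLike.norm_conj, Complex.norm_real, norm_eq_abs]
  calc _ ≤ ‖h (z.2 - (j : ℝ) • a)‖ * ‖h (z.1 - (j : ℝ) • a)‖ * (|R| ^ 3 / 3) * 2 := by
        gcongr
        exact abs_ballFT_le R _
    _ = _ := by ring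

lemma integrable_deformationIntegrand :
    Integrable (deformationIntegrand m h a R j) (volume : Measure (Space3 × Space3)) := by
  refine Integrable.mono' (((h.integrable.norm.comp_sub_right _).mul_prod
    (h.integrable.norm.comp_sub_right _)).const_mul (2 * (|R| ^ 3 / 3))) ?_
    (.of_forall (norm_deformationIntegrand_le m h a R j))
  have := measurable_ballFT R
  apply Measurable.aestronglyMeasurable
  unfold deformationIntegrand relEnergy
  fun_prop

end Integrand

lemma tendsto_deformationIntegrand_add_smul {a : Space3} (ha : a ≠ 0) (m : ℝ) (h : 𝓢(Space3, ℂ))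
    (R : ℝ) (z : Space3 × Space3) :
    Tendsto (fun j : ℕ => deformationIntegrand m h a R j (z + ((j : ℝ) • a, (j : ℝ) • a)))
      atTop (𝓝 0) := by
  simp_rw [deformationIntegrand_add_smul]
  have := (Complex.continuous_ofReal.tendsto 0).comp
    ((tendsto_deformationFactor_add_smul ha m z.1 z.2).comp tendsto_natCast_atTop_atTop)
  simpa using this.const_mul ((starRingEnd ℂ) (h z.2) * h z.1 * ((ballFT R ‖z.1 - z.2‖ : ℝ) : ℂ))

theorem deformation_term_vanishes_general
    (m : ℝ) (h : 𝓢(Space3, ℂ)) (a : Space3) (ha : a ≠ 0)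
    (R : ℝ) :
    (∀ j : ℕ, Integrable (deformationIntegrand m h a R j) (volume : Measure (Space3 × Space3))) ∧
    Filter.Tendsto
      (fun j : ℕ => ∫ z : Space3 × Space3, deformationIntegrand m h a R j z)
      Filter.atTop (nhds 0) := by
  refine ⟨integrable_deformationIntegrand m h a R, ?_⟩
  have hshift : ∀ j : ℕ, ∫ z, deformationIntegrand m h a R j z =
      ∫ z, deformationIntegrand m h a R j (z + ((j : ℝ) • a, (j : ℝ) • a)) := fun j =>
    (integral_add_right_eq_self _ _).symm
  simp_rw [hshift]
  simpa using tendsto_integral_of_dominated_convergence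
    (fun z => 2 * (|R| ^ 3 / 3) * (‖h z.1‖ * ‖h z.2‖))
    (fun j => ((integrable_deformationIntegrand m h a R j).comp_add_right _).aestronglyMeasurable)
    ((h.integrable.norm.mul_prod h.integrable.norm).const_mul _)
    (fun j => .of_forall fun z => by
      simpa using norm_deformationIntegrand_le m h a R j (z + ((j : ℝ) • a, (j : ℝ) • a)))
    (.of_forall (tendsto_deformationIntegrand_add_smul ha m h R))

theorem deformation_term_vanishes
    (m : ℝ) (hm : 0 < m) (h : 𝓢(Space3, ℂ)) (a : Space3) (ha : a ≠ 0)
    (R : ℝ) (hR : 0 < R) :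
    (∀ j : ℕ, Integrable (deformationIntegrand m h a R j) (volume : Measure (Space3 × Space3))) ∧
    Filter.Tendsto
      (fun j : ℕ => ∫ z : Space3 × Space3, deformationIntegrand m h a R j z)
      Filter.atTop (nhds 0) :=
  deformation_term_vanishes_general m h a ha R

end
end

section
/- Let μ and ν be finite Borel measures on ℝ³ with μ absolutely continuous with respect to Lebesgue measure, and let r > 0. Assume that μ(Δ) ≤ ν({y : ∃x ∈ Δ, ‖y − x‖ < r}) for every set Δ that is a finite union of open balls of finite radius. Then: (i) μ(Δ) ≤ ν({y : ∃x ∈ Δ, ‖y − x‖ < r}) for every open set Δ ⊂ ℝ³; and (ii) μ(K) ≤ ν({y : dist(y,K) ≤ r}) for every compact set K ⊂ ℝ³. -/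
/- STATEMENT 16: if two finite Borel measures μ, ν on ℝ³ (μ ≪ Lebesgue) satisfy
   μ(Δ) ≤ ν(open r-thickening of Δ) for all finite unions Δ of open balls, then the
   same holds for all open sets, and μ(K) ≤ ν(closed r-thickening of K) for all
   compact K. -/

noncomputable section

open MeasureTheory

lemma thick_set_eq (r : ℝ) (S : Set Space3) :
    {y : Space3 | ∃ x ∈ S, ‖y - x‖ < r} = Metric.thickening r S := by
  ext y
  simp [Metric.mem_thickening_iff, dist_eq_norm]

theorem thickening_inequality_extension
    (μ ν : Measure Space3) [IsFiniteMeasure μ] [IsFiniteMeasure ν]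
    (hac : μ ≪ volume) (r : ℝ) (hr : 0 < r)
    (hballs : ∀ (n : ℕ) (c : Fin n → Space3) (ρ : Fin n → ℝ),
      μ (⋃ i : Fin n, Metric.ball (c i) (ρ i))
        ≤ ν {y : Space3 | ∃ x ∈ ⋃ i : Fin n, Metric.ball (c i) (ρ i), ‖y - x‖ < r}) :
    (∀ Δ : Set Space3, IsOpen Δ →
        μ Δ ≤ ν {y : Space3 | ∃ x ∈ Δ, ‖y - x‖ < r}) ∧
    (∀ K : Set Space3, IsCompact K →
        μ K ≤ ν {y : Space3 | Metric.infDist y K ≤ r}) := by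
  have hopen : ∀ Δ : Set Space3, IsOpen Δ →
      μ Δ ≤ ν {y : Space3 | ∃ x ∈ Δ, ‖y - x‖ < r} := by
    intro Δ hΔ
    rcases Set.eq_empty_or_nonempty Δ with hΔe | hΔne
    · simp [hΔe]
    -- Cover Δ by balls contained in Δ
    have hball : ∀ x : Δ, ∃ ε : ℝ, 0 < ε ∧ Metric.ball (x : Space3) ε ⊆ Δ := by
      intro x
      rcases Metric.isOpen_iff.1 hΔ x x.2 with ⟨ε, hε, hsub⟩
      exact ⟨ε, hε, hsub⟩
    choose ε hεpos hεsub using hball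
    have hcover : (⋃ x : Δ, Metric.ball (x : Space3) (ε x)) = Δ := by
      apply Set.Subset.antisymm
      · exact Set.iUnion_subset fun x => hεsub x
      · intro y hy
        exact Set.mem_iUnion.2 ⟨⟨y, hy⟩, Metric.mem_ball_self (hεpos ⟨y, hy⟩)⟩
    obtain ⟨T, hTc, hT⟩ := TopologicalSpace.isOpen_iUnion_countable
      (fun x : Δ => Metric.ball (x : Space3) (ε x)) (fun _ => Metric.isOpen_ball)
    have hTne : T.Nonempty := by
      rcases hΔne with ⟨y, hy⟩
      by_contra h
      rw [Set.not_nonempty_iff_eq_empty] at h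
      have : y ∈ ⋃ x ∈ T, Metric.ball (x : Space3) (ε x) := by
        rw [hT, hcover]; exact hy
      simp [h] at this
    obtain ⟨e, he⟩ := hTc.exists_eq_range hTne
    -- Δ is the union of the sequence of balls indexed by e
    have hΔ_eq : Δ = ⋃ n : ℕ, Metric.ball ((e n : Space3)) (ε (e n)) := by
      have h1 : Δ = ⋃ i ∈ T, Metric.ball ((i : Space3)) (ε i) := by rw [hT, hcover]
      rw [he, Set.biUnion_range] at h1
      exact h1
    set A : ℕ → Set Space3 := fun n => ⋃ i : Fin n, Metric.ball ((e i : Space3)) (ε (e i))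
    have hAmono : Monotone A := by
      intro m n hmn
      apply Set.iUnion_subset
      intro i
      exact Set.subset_iUnion_of_subset (Fin.castLE hmn i) (by simp)
    have hAU : (⋃ n, A n) = Δ := by
      rw [hΔ_eq]
      apply Set.Subset.antisymm
      · exact Set.iUnion_subset fun n => Set.iUnion_subset fun i =>
          Set.subset_iUnion_of_subset (i : ℕ) subset_rfl
      · exact Set.iUnion_subset fun n =>
          Set.subset_iUnion_of_subset (n + 1)
            (Set.subset_iUnion_of_subset (⟨n, Nat.lt_succ_self n⟩ : Fin (n + 1)) subset_rfl)
    have hmeas : μ Δ = ⨆ n, μ (A n) := by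
      rw [← hAU]
      exact hAmono.measure_iUnion
    rw [hmeas]
    apply iSup_le
    intro n
    calc μ (A n) ≤ ν {y : Space3 | ∃ x ∈ A n, ‖y - x‖ < r} :=
          hballs n (fun i => (e i : Space3)) (fun i => ε (e i))
      _ ≤ ν {y : Space3 | ∃ x ∈ Δ, ‖y - x‖ < r} := by
          apply measure_mono
          rintro y ⟨x, hx, hxy⟩
          have hxΔ : x ∈ Δ := by rw [← hAU]; exact Set.mem_iUnion.2 ⟨n, hx⟩
          exact ⟨x, hxΔ, hxy⟩
  refine ⟨hopen, ?_⟩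
  intro K hK
  rcases Set.eq_empty_or_nonempty K with hKe | hKne
  · simp [hKe, Metric.infDist_empty]
  -- the target set is the closed r-thickening
  have htarget : {y : Space3 | Metric.infDist y K ≤ r} = Metric.cthickening r K := by
    ext y
    rw [Metric.mem_cthickening_iff]
    constructor
    · intro h
      rw [ENNReal.le_ofReal_iff_toReal_le (Metric.infEdist_ne_top hKne) hr.le]
      exact h
    · intro h
      rw [ENNReal.le_ofReal_iff_toReal_le (Metric.infEdist_ne_top hKne) hr.le] at h
      exact h
  rw [htarget]
  -- cthickening as intersection of the sequence of thickenings
  set δ : ℕ → ℝ := fun n => r + 1 / (n + 1)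
  have hδpos : ∀ n, r < δ n := fun n => by
    have : (0 : ℝ) < 1 / (n + 1) := by positivity
    simp only [δ]; linarith
  have hcth : Metric.cthickening r K = ⋂ n : ℕ, Metric.thickening (δ n) K := by
    have := Metric.cthickening_eq_iInter_thickening' hr.le (Set.range δ)
      (by rintro _ ⟨n, rfl⟩; exact hδpos n)
      (by
        intro ε hε
        obtain ⟨n, hn⟩ := exists_nat_one_div_lt (sub_pos.2 hε)
        refine ⟨δ n, ⟨n, rfl⟩, hδpos n, ?_⟩
        simp only [δ]
        push_cast
        linarith) K
    rw [this]
    rw [Set.biInter_range]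
  have hstep : ∀ n : ℕ, μ K ≤ ν (Metric.thickening (δ n) K) := by
    intro n
    have hd : (0 : ℝ) < 1 / (n + 1) := by positivity
    have h1 : K ⊆ Metric.thickening (1 / (n + 1)) K :=
      Metric.self_subset_thickening hd K
    have h2 := hopen (Metric.thickening (1 / (n + 1)) K) Metric.isOpen_thickening
    rw [thick_set_eq] at h2
    calc μ K ≤ μ (Metric.thickening (1 / (n + 1)) K) := measure_mono h1
      _ ≤ ν (Metric.thickening r (Metric.thickening (1 / (n + 1)) K)) := h2
      _ ≤ ν (Metric.thickening (δ n) K) := by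
          apply measure_mono
          exact Metric.thickening_thickening_subset r (1 / (n + 1)) K
  rw [hcth]
  have hanti : Antitone (fun n : ℕ => Metric.thickening (δ n) K) := by
    intro m n hmn
    apply Metric.thickening_mono
    simp only [δ]
    have hmn' : (m : ℝ) ≤ n := Nat.cast_le.2 hmn
    have : (1 : ℝ) / (n + 1) ≤ 1 / (m + 1) :=
      one_div_le_one_div_of_le (by positivity) (by linarith)
    linarith
  have hiInf : ν (⋂ n, Metric.thickening (δ n) K) = ⨅ n, ν (Metric.thickening (δ n) K) :=
    Directed.measure_iInter
      (fun n => (Metric.isOpen_thickening.measurableSet).nullMeasurableSet)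
      (hanti.directed_ge)
      ⟨0, measure_ne_top ν _⟩
  rw [hiInf]
  exact le_iInf hstep

end
end
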